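/- Let μ be an uncountable regular cardinal with 2^{<μ} = μ (equivalently, μ^{<μ} = μ), and let D be a uniform ultrafilter on μ (every member of D has cardinality μ). Then the set-ultraproduct ∏_{i<μ} 2^{|i|}/D has cardinality 2^μ, and consequently the ultrapower μ^μ/D (of the set μ, i.e. ∏_{i<μ} μ/D) also has cardinality 2^μ. -/

import Mathlib

/-!
The ultraproduct is a quotient of `∏ i, C i`, so it has at most `μ ^ μ = 2 ^ μ` elements.
Conversely, initial segments of `μ` have fewer than `μ` elements, so a uniform ultrafilter
contains every final segment; hence a set `A ⊆ μ` can be recovered from the class of its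
traces `(A ∩ i)_{i < μ}`, which gives `2 ^ μ` distinct elements of `∏_{i<μ} 2^{|i|}/D`.
-/


open Cardinal Filter

universe u

namespace ShSi641

variable {ι : Type u}

/-- The set-theoretic ultraproduct `∏_{i} B i / D`. -/
def UProd (D : Ultrafilter ι) (B : ι → Type u) : Type u :=
  Quotient ((D : Filter ι).productSetoid B)

namespace UProd

variable {D : Ultrafilter ι} {B : ι → Type u}

/-- The equivalence class `f/D` of `f ∈ ∏_i B i`. -/
def mk (D : Ultrafilter ι) (f : ∀ i, B i) : UProd D B :=
  Quotient.mk ((D : Filter ι).productSetoid B) f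

@[elab_as_elim]
theorem ind {motive : UProd D B → Prop} (h : ∀ f : ∀ i, B i, motive (mk D f)) :
    ∀ x : UProd D B, motive x :=
  Quotient.ind h

/-- Lift of a family of binary relations to the ultraproduct. -/
def uRel (D : Ultrafilter ι) {B : ι → Type u} (r : ∀ i, B i → B i → Prop) :
    UProd D B → UProd D B → Prop :=
  Quotient.lift₂ (fun f g => ∀ᶠ i in (D : Filter ι), r i (f i) (g i))
    (fun _ _ _ _ hf hg => propext <| eventually_congr <|
      (hf.and hg).mono fun _ ⟨hf', hg'⟩ => by rw [hf', hg'])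

theorem uRel_mk {r : ∀ i, B i → B i → Prop} {f g : ∀ i, B i} :
    uRel D r (mk D f) (mk D g) ↔ ∀ᶠ i in (D : Filter ι), r i (f i) (g i) :=
  Iff.rfl

section BA

variable [∀ i, BooleanAlgebra (B i)]

/-- Pointwise binary operations descend to the ultraproduct. -/
def map₂ (op : ∀ i, B i → B i → B i) : UProd D B → UProd D B → UProd D B :=
  Quotient.map₂ (fun f g i => op i (f i) (g i))
    (fun _ _ hf _ _ hg => (hf.and hg).mono fun _ ⟨hf', hg'⟩ => by
      dsimp only; rw [hf', hg'])

def map₁ (op : ∀ i, B i → B i) : UProd D B → UProd D B :=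
  Quotient.map (fun f i => op i (f i))
    (fun _ _ hf => hf.mono fun _ hf' => by dsimp only; rw [hf'])

instance instPartialOrder : PartialOrder (UProd D B) where
  le := uRel D fun _ x y => x ≤ y
  le_refl x := ind (fun f => Eventually.of_forall fun i => le_refl (f i)) x
  le_trans x y z := Quotient.inductionOn₃ x y z fun _ _ _ h1 h2 =>
    (h1.and h2).mono fun _ ⟨a, b⟩ => a.trans b
  le_antisymm x y := Quotient.inductionOn₂ x y fun _ _ h1 h2 =>
    Quotient.sound <| (h1.and h2).mono fun _ ⟨a, b⟩ => le_antisymm a b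

instance instBooleanAlgebra : BooleanAlgebra (UProd D B) where
  sup := map₂ fun _ x y => x ⊔ y
  inf := map₂ fun _ x y => x ⊓ y
  compl := map₁ fun _ x => xᶜ
  sdiff := map₂ fun _ x y => x \ y
  himp := map₂ fun _ x y => x ⇨ y
  top := mk D fun _ => ⊤
  bot := mk D fun _ => ⊥
  le_sup_left x y := Quotient.inductionOn₂ x y fun _ _ =>
    Eventually.of_forall fun _ => le_sup_left
  le_sup_right x y := Quotient.inductionOn₂ x y fun _ _ =>
    Eventually.of_forall fun _ => le_sup_right
  sup_le x y z := Quotient.inductionOn₃ x y z fun _ _ _ h1 h2 =>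
    (h1.and h2).mono fun _ ⟨a, b⟩ => sup_le a b
  inf_le_left x y := Quotient.inductionOn₂ x y fun _ _ =>
    Eventually.of_forall fun _ => inf_le_left
  inf_le_right x y := Quotient.inductionOn₂ x y fun _ _ =>
    Eventually.of_forall fun _ => inf_le_right
  le_inf x y z := Quotient.inductionOn₃ x y z fun _ _ _ h1 h2 =>
    (h1.and h2).mono fun _ ⟨a, b⟩ => le_inf a b
  le_sup_inf x y z := Quotient.inductionOn₃ x y z fun _ _ _ =>
    Eventually.of_forall fun _ => le_sup_inf
  inf_compl_le_bot x := ind (fun _ => Eventually.of_forall fun _ => inf_compl_eq_bot.le) x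
  top_le_sup_compl x := ind (fun _ => Eventually.of_forall fun _ => sup_compl_eq_top.ge) x
  le_top x := ind (fun _ => Eventually.of_forall fun _ => le_top) x
  bot_le x := ind (fun _ => Eventually.of_forall fun _ => bot_le) x
  sdiff_eq x y := Quotient.inductionOn₂ x y fun _ _ =>
    Quotient.sound <| Eventually.of_forall fun _ => sdiff_eq
  himp_eq x y := Quotient.inductionOn₂ x y fun _ _ =>
    Quotient.sound <| Eventually.of_forall fun _ => himp_eq

end BA

end UProd

/-- `Length(B)`: the sup of cardinalities of subsets of `B` linearly ordered
by the Boolean partial order. -/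
noncomputable def baLength (B : Type u) [BooleanAlgebra B] : Cardinal.{u} :=
  ⨆ X : {X : Set B // IsChain (· ≤ ·) X}, #X.1

/-- `Length⁺(B)`: the sup of the cardinal successors of cardinalities of subsets of `B`
linearly ordered by the Boolean partial order. -/
noncomputable def baLengthPlus (B : Type u) [BooleanAlgebra B] : Cardinal.{u} :=
  ⨆ X : {X : Set B // IsChain (· ≤ ·) X}, Order.succ #X.1


/-- A cardinal is weakly inaccessible if it is an uncountable regular limit cardinal. -/
def IsWeaklyInaccessible (c : Cardinal.{u}) : Prop :=
  Cardinal.aleph0 < c ∧ c.IsRegular ∧ Order.IsSuccLimit c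

/-- A (strict) order is `λ`-like if its carrier has cardinality `λ` while every
proper initial segment has cardinality `< λ`. -/
def IsLambdaLike {α : Type u} (r : α → α → Prop) (lam : Cardinal.{u}) : Prop :=
  #α = lam ∧ ∀ x : α, #{y : α // r y x} < lam

/-- An antichain of a Boolean algebra: a set of pairwise disjoint nonzero elements. -/
def IsBAAntichain {B : Type u} [BooleanAlgebra B] (X : Set B) : Prop :=
  (∀ x ∈ X, x ≠ ⊥) ∧ X.Pairwise fun x y => x ⊓ y = ⊥

/-- The cellularity `c(B)` of a Boolean algebra. -/
noncomputable def baCellularity (B : Type u) [BooleanAlgebra B] : Cardinal.{u} :=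
  ⨆ X : {X : Set B // IsBAAntichain X}, #X.1

/-- `c⁺(B)`, the sup of successors of cardinalities of antichains. -/
noncomputable def baCellularityPlus (B : Type u) [BooleanAlgebra B] : Cardinal.{u} :=
  ⨆ X : {X : Set B // IsBAAntichain X}, Order.succ #X.1

/-- A subset of a Boolean algebra which is well-ordered by the Boolean order. -/
def IsWellOrderedChain {B : Type u} [BooleanAlgebra B] (X : Set B) : Prop :=
  IsChain (· ≤ ·) X ∧ X.WellFoundedOn (· < ·)

/-- The depth of a Boolean algebra. -/
noncomputable def baDepth (B : Type u) [BooleanAlgebra B] : Cardinal.{u} :=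
  ⨆ X : {X : Set B // IsWellOrderedChain X}, #X.1

/-- `Depth⁺(B)`. -/
noncomputable def baDepthPlus (B : Type u) [BooleanAlgebra B] : Cardinal.{u} :=
  ⨆ X : {X : Set B // IsWellOrderedChain X}, Order.succ #X.1

/-- The set `S` is a subalgebra of the Boolean algebra `B` (as a set). -/
def IsSubalgebraSet {B : Type u} [BooleanAlgebra B] (S : Set B) : Prop :=
  ⊥ ∈ S ∧ ⊤ ∈ S ∧ (∀ x ∈ S, xᶜ ∈ S) ∧ (∀ x ∈ S, ∀ y ∈ S, x ⊔ y ∈ S) ∧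
    ∀ x ∈ S, ∀ y ∈ S, x ⊓ y ∈ S

/-- `C` is a closed unbounded subset of the ordinal `l`. -/
def ClubIn (C : Set Ordinal.{u}) (l : Ordinal.{u}) : Prop :=
  C ⊆ Set.Iio l ∧ (∀ α < l, ∃ β ∈ C, α ≤ β) ∧
    ∀ δ < l, δ ≠ 0 → (∀ α < δ, ∃ β ∈ C, α ≤ β ∧ β < δ) → δ ∈ C

/-- `S` is a stationary subset of the ordinal `l`: it meets every club of `l`. -/
def StationaryIn (S : Set Ordinal.{u}) (l : Ordinal.{u}) : Prop :=
  ∀ C, ClubIn C l → (S ∩ C).Nonempty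

namespace UProd

variable {D : Ultrafilter ι} {B C : ι → Type u}

def map (g : ∀ i, B i → C i) : UProd D B → UProd D C :=
  Quotient.map (fun f i => g i (f i))
    (fun _ _ hf => hf.mono fun i hf' => congrArg (g i) hf')

theorem map_injective {g : ∀ i, B i → C i} (hg : ∀ i, Function.Injective (g i)) :
    Function.Injective (map (D := D) g) := by
  refine Quotient.ind₂ fun f f' h => Quotient.sound ?_
  exact (Quotient.exact h).mono fun i hi => hg i hi

end UProd

theorem mk_uprod_le_prod {D : Ultrafilter ι} {B : ι → Type u} :
    #(UProd D B) ≤ Cardinal.prod fun i => #(B i) :=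
  Cardinal.mk_pi B ▸ Cardinal.mk_quotient_le

theorem mk_uprod_le_mk_uprod {D : Ultrafilter ι} {B C : ι → Type u}
    (h : ∀ i, #(B i) ≤ #(C i)) : #(UProd D B) ≤ #(UProd D C) :=
  Cardinal.mk_le_of_injective (UProd.map_injective fun i => (h i).some.injective)

end ShSi641

namespace Ultrafilter

open scoped Ordinal

variable {ι : Type u}

theorem compl_mem_of_mk_lt {D : Ultrafilter ι} {κ : Cardinal.{u}}
    (huniform : ∀ s ∈ D, #s = κ) {s : Set ι} (hs : #s < κ) : sᶜ ∈ D :=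
  (D.mem_or_compl_mem s).resolve_left fun h => (huniform s h ▸ hs).false

theorem Ioi_mem_of_uniform [LinearOrder ι] [WellFoundedLT ι] (hι : ord #ι = typeLT ι)
    (hinf : ℵ₀ ≤ #ι) {D : Ultrafilter ι} (huniform : ∀ s ∈ D, #s = #ι) (a : ι) :
    Set.Ioi a ∈ D := by
  rw [← Set.compl_Iic]
  refine D.compl_mem_of_mk_lt huniform ?_
  calc #(Set.Iic a) = #(insert a (Set.Iio a) : Set ι) := by rw [Set.Iio_insert]
    _ ≤ #(Set.Iio a) + 1 := Cardinal.mk_insert_le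
    _ < #ι := Cardinal.add_lt_of_lt hinf (Cardinal.mk_Iio_lt a hι)
        (Cardinal.one_lt_aleph0.trans_le hinf)

end Ultrafilter

namespace ShSi641

variable {ι : Type u}

theorem UProd.injective_mk_trace [LinearOrder ι] {D : Ultrafilter ι}
    (hD : ∀ a, Set.Ioi a ∈ D) :
    Function.Injective fun A : Set ι => UProd.mk D fun i => {j : {j : ι // j < i} | j.1 ∈ A} := by
  intro A A' h
  ext a
  obtain ⟨i, hi, hai⟩ := ((Quotient.exact h : ∀ᶠ i in (D : Filter ι), _).and (hD a)).exists
  exact Set.ext_iff.1 hi ⟨a, hai⟩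

theorem two_pow_mk_le_mk_uprod [LinearOrder ι] {D : Ultrafilter ι} (hD : ∀ a, Set.Ioi a ∈ D)
    {C : ι → Type u} (hC : ∀ i, (2 : Cardinal.{u}) ^ #{j : ι // j < i} ≤ #(C i)) :
    2 ^ #ι ≤ #(UProd D C) := by
  rw [← Cardinal.mk_set]
  refine (Cardinal.mk_le_of_injective (UProd.injective_mk_trace hD)).trans ?_
  exact mk_uprod_le_mk_uprod fun i => (Cardinal.mk_set).trans_le (hC i)

theorem mk_uprod_eq_two_pow {μ : Cardinal.{u}} (hμ : ℵ₀ ≤ μ)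
    {D : Ultrafilter μ.ord.ToType} (huniform : ∀ s ∈ D, #s = μ) {C : μ.ord.ToType → Type u}
    (hup : ∀ i, #(C i) ≤ μ)
    (hlo : ∀ i, (2 : Cardinal.{u}) ^ #{j : μ.ord.ToType // j < i} ≤ #(C i)) :
    #(UProd D C) = 2 ^ μ := by
  have hcard : #μ.ord.ToType = μ := Cardinal.mk_ord_toType μ
  refine le_antisymm ?_ ?_
  · calc #(UProd D C) ≤ Cardinal.prod fun i => #(C i) := mk_uprod_le_prod
      _ ≤ Cardinal.prod fun _ : μ.ord.ToType => μ := Cardinal.prod_le_prod _ _ hup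
      _ = 2 ^ μ := by rw [Cardinal.prod_const', hcard, Cardinal.power_self_eq hμ]
  · have hD := Ultrafilter.Ioi_mem_of_uniform (D := D) (by simp) (by rwa [hcard])
      (by rwa [hcard])
    simpa [hcard] using two_pow_mk_le_mk_uprod hD hlo

theorem two_pow_mk_Iio_le {μ : Cardinal.{u}} (hsmall : ∀ θ < μ, (2 : Cardinal.{u}) ^ θ ≤ μ)
    (i : μ.ord.ToType) : (2 : Cardinal.{u}) ^ #{j : μ.ord.ToType // j < i} ≤ μ :=
  hsmall _ <| (Cardinal.mk_Iio_lt i (by simp)).trans_eq (Cardinal.mk_ord_toType μ)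

theorem statement_7_general (μ : Cardinal.{u}) (hunc : Cardinal.aleph0 < μ)
    (hsmall : ∀ θ < μ, (2 : Cardinal.{u}) ^ θ ≤ μ)
    (D : Ultrafilter μ.ord.ToType) (huniform : ∀ s ∈ D, #s = μ) :
    #(UProd D fun i => ((2 : Cardinal.{u}) ^ #{j : μ.ord.ToType // j < i}).out) = 2 ^ μ ∧
    #(UProd D fun _ => μ.ord.ToType) = 2 ^ μ := by
  constructor
  · exact mk_uprod_eq_two_pow hunc.le huniform
      (fun i => (Cardinal.mk_out _).trans_le (two_pow_mk_Iio_le hsmall i))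
      (fun i => (Cardinal.mk_out _).ge)
  · exact mk_uprod_eq_two_pow hunc.le huniform (fun _ => (Cardinal.mk_ord_toType μ).le)
      (fun i => (Cardinal.mk_ord_toType μ).symm ▸ two_pow_mk_Iio_le hsmall i)

/-- for `μ` uncountable regular with `2^{<μ} = μ` and `D` a uniform
ultrafilter on `μ`, the ultraproduct `∏_{i<μ} 2^{|i|}/D` has cardinality `2^μ`, and hence
so does the ultrapower `μ^μ/D`. -/
theorem statement_7 (μ : Cardinal.{u}) (hreg : μ.IsRegular) (hunc : Cardinal.aleph0 < μ)
    (hsmall : ∀ θ < μ, (2 : Cardinal.{u}) ^ θ ≤ μ)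
    (D : Ultrafilter μ.ord.ToType) (huniform : ∀ s ∈ D, #s = μ) :
    #(UProd D fun i => ((2 : Cardinal.{u}) ^ #{j : μ.ord.ToType // j < i}).out) = 2 ^ μ ∧
    #(UProd D fun _ => μ.ord.ToType) = 2 ^ μ :=
  statement_7_general μ hunc hsmall D huniform

end ShSi641
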